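/- Let φ : ℂⁿ → ℝ be of class C² and let g : ℂⁿ → ℂ be of class C². Set h = e^{φ/2}·g. Then pointwise e^{−φ/2} · Σ_{j=1}^n ∂/∂z̄_j ( (∂φ/∂z_j)·h − ∂h/∂z_j ) = ¼ ( −Δ_A g + V·g ), where Δ_A g = Σ_{j=1}^n [(−∂/∂x_j − (i/2) ∂φ/∂y_j)² + (−∂/∂y_j + (i/2) ∂φ/∂x_j)²] g and V = ½ Δφ. -/

import Mathlib

open MeasureTheory

/-- Partial derivative `∂f/∂x_j` of `f : ℂⁿ → ℂ`, identifying `ℂⁿ ≅ ℝ²ⁿ`, `z_j = x_j + i y_j`. -/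
noncomputable def DXc (n : ℕ) (j : Fin n) (f : (Fin n → ℂ) → ℂ) (z : Fin n → ℂ) : ℂ :=
  fderiv ℝ f z (Pi.single j 1)

/-- Partial derivative `∂f/∂y_j` of `f : ℂⁿ → ℂ`. -/
noncomputable def DYc (n : ℕ) (j : Fin n) (f : (Fin n → ℂ) → ℂ) (z : Fin n → ℂ) : ℂ :=
  fderiv ℝ f z (Pi.single j Complex.I)

/-- Partial derivative `∂φ/∂x_j` of `φ : ℂⁿ → ℝ`. -/
noncomputable def DXr (n : ℕ) (j : Fin n) (φ : (Fin n → ℂ) → ℝ) (z : Fin n → ℂ) : ℝ :=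
  fderiv ℝ φ z (Pi.single j 1)

/-- Partial derivative `∂φ/∂y_j` of `φ : ℂⁿ → ℝ`. -/
noncomputable def DYr (n : ℕ) (j : Fin n) (φ : (Fin n → ℂ) → ℝ) (z : Fin n → ℂ) : ℝ :=
  fderiv ℝ φ z (Pi.single j Complex.I)

/-- Wirtinger derivative `∂f/∂z_j = ½(∂f/∂x_j - i ∂f/∂y_j)`. -/
noncomputable def wdz (n : ℕ) (j : Fin n) (f : (Fin n → ℂ) → ℂ) (z : Fin n → ℂ) : ℂ :=
  (1 / 2) * (DXc n j f z - Complex.I * DYc n j f z)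

/-- Wirtinger derivative `∂f/∂z̄_j = ½(∂f/∂x_j + i ∂f/∂y_j)`. -/
noncomputable def wdzb (n : ℕ) (j : Fin n) (f : (Fin n → ℂ) → ℂ) (z : Fin n → ℂ) : ℂ :=
  (1 / 2) * (DXc n j f z + Complex.I * DYc n j f z)

/-- The operator `(-∂/∂x_j - (i/2) ∂φ/∂y_j)` appearing in the magnetic Laplacian. -/
noncomputable def opM1 (n : ℕ) (φ : (Fin n → ℂ) → ℝ) (j : Fin n)
    (v : (Fin n → ℂ) → ℂ) : (Fin n → ℂ) → ℂ :=
  fun z => -(DXc n j v z) - (Complex.I / 2) * (DYr n j φ z : ℂ) * v z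

/-- The operator `(-∂/∂y_j + (i/2) ∂φ/∂x_j)` appearing in the magnetic Laplacian. -/
noncomputable def opM2 (n : ℕ) (φ : (Fin n → ℂ) → ℝ) (j : Fin n)
    (v : (Fin n → ℂ) → ℂ) : (Fin n → ℂ) → ℂ :=
  fun z => -(DYc n j v z) + (Complex.I / 2) * (DXr n j φ z : ℂ) * v z

/-- The magnetic Laplacian
`Δ_A = Σ_j [(-∂/∂x_j - (i/2)∂φ/∂y_j)² + (-∂/∂y_j + (i/2)∂φ/∂x_j)²]`. -/
noncomputable def lapA (n : ℕ) (φ : (Fin n → ℂ) → ℝ) (g : (Fin n → ℂ) → ℂ)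
    (z : Fin n → ℂ) : ℂ :=
  ∑ j, (opM1 n φ j (opM1 n φ j g) z + opM2 n φ j (opM2 n φ j g) z)

/-- The Laplacian `Δφ = Σ_j (∂²φ/∂x_j² + ∂²φ/∂y_j²)` of `φ : ℂⁿ → ℝ`. -/
noncomputable def lapR (n : ℕ) (φ : (Fin n → ℂ) → ℝ) (z : Fin n → ℂ) : ℝ :=
  ∑ j, (DXr n j (fun w => DXr n j φ w) z + DYr n j (fun w => DYr n j φ w) z)

/-- The electric potential `V = ½ Δφ`. -/
noncomputable def potV (n : ℕ) (φ : (Fin n → ℂ) → ℝ) (z : Fin n → ℂ) : ℝ :=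
  (1 / 2) * lapR n φ z

/-!
Write `Π₁ = opM1 n φ j` and `Π₂ = opM2 n φ j`, both instances of `magneticDeriv`. Conjugation
by `e^{φ/2}` turns `u ↦ (∂φ/∂z_j) u - ∂u/∂z_j` into `½(Π₁ - iΠ₂)` and `∂/∂z̄_j` into
`-½(Π₁ + iΠ₂)`, so the `j`-th summand is
`-¼(Π₁ + iΠ₂)(Π₁ - iΠ₂) g = -¼(Π₁² + Π₂²) g + (i/4)[Π₁, Π₂] g`,
and the commutator `[Π₁, Π₂] = -(i/2)(∂²/∂x_j² + ∂²/∂y_j²)φ` yields the potential term.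
-/

open Complex

section MagneticDerivative

variable {X F : Type*} [NormedAddCommGroup X] [NormedSpace ℝ X]
  [NormedAddCommGroup F] [NormedSpace ℝ F]

theorem ContDiff.differentiable_fderiv_apply {f : X → F} (hf : ContDiff ℝ 2 f) (v : X) :
    Differentiable ℝ (fun w => fderiv ℝ f w v) :=
  ((hf.fderiv_right (m := 1) (by norm_num)).clm_apply contDiff_const).differentiable one_ne_zero

theorem ContDiff.fderiv_fderiv_apply_comm {f : X → F} (hf : ContDiff ℝ 2 f) (z u v : X) :
    fderiv ℝ (fun w => fderiv ℝ f w u) z v = fderiv ℝ (fun w => fderiv ℝ f w v) z u := by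
  have hd : DifferentiableAt ℝ (fderiv ℝ f) z :=
    ((hf.fderiv_right (m := 1) (by norm_num)).differentiable one_ne_zero).differentiableAt
  rw [fderiv_clm_apply hd (differentiableAt_const u), fderiv_clm_apply hd (differentiableAt_const v)]
  simpa using hf.contDiffAt.isSymmSndFDerivAt (by simp) v u

theorem hasFDerivAt_ofReal_comp {f : X → ℝ} {z : X} (hf : DifferentiableAt ℝ f z) :
    HasFDerivAt (fun w => (f w : ℂ)) (ofRealCLM.comp (fderiv ℝ f z)) z :=
  ofRealCLM.hasFDerivAt.comp z hf.hasFDerivAt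

theorem fderiv_ofReal_comp_apply {f : X → ℝ} {z : X} (hf : DifferentiableAt ℝ f z) (v : X) :
    fderiv ℝ (fun w => (f w : ℂ)) z v = fderiv ℝ f z v := by
  rw [(hasFDerivAt_ofReal_comp hf).fderiv]
  rfl

theorem fderiv_exp_half_mul_apply {φ : X → ℝ} {u : X → ℂ} {z : X}
    (hφ : DifferentiableAt ℝ φ z) (hu : DifferentiableAt ℝ u z) (v : X) :
    fderiv ℝ (fun w => exp ((φ w : ℂ) / 2) * u w) z v
      = exp ((φ z : ℂ) / 2) * (fderiv ℝ u z v + (fderiv ℝ φ z v : ℂ) / 2 * u z) := by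
  have hhalf : HasFDerivAt (fun w => (φ w : ℂ) / 2)
      ((2 : ℂ)⁻¹ • ofRealCLM.comp (fderiv ℝ φ z)) z := by
    simpa only [Pi.smul_def, smul_eq_mul, div_eq_inv_mul] using
      (hasFDerivAt_ofReal_comp hφ).const_smul (2 : ℂ)⁻¹
  rw [(hhalf.cexp.fun_mul hu.hasFDerivAt).fderiv]
  simp
  ring

noncomputable def magneticDeriv (φ : X → ℝ) (a b : X) (v : X → ℂ) (z : X) : ℂ :=
  -(fderiv ℝ v z a) - (I / 2) * (fderiv ℝ φ z b : ℂ) * v z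

variable {φ : X → ℝ}

theorem ContDiff.differentiable_magneticDeriv {v : X → ℂ} (hφ : ContDiff ℝ 2 φ)
    (hv : ContDiff ℝ 2 v) (a b : X) : Differentiable ℝ (magneticDeriv φ a b v) := by
  have hva := hv.differentiable_fderiv_apply a
  have hφb := hφ.differentiable_fderiv_apply b
  have hv' := hv.differentiable two_ne_zero
  unfold magneticDeriv
  fun_prop

theorem magneticDeriv_linear_comb {a b z : X} {u v : X → ℂ}
    (hu : DifferentiableAt ℝ u z) (hv : DifferentiableAt ℝ v z) (c d : ℂ) :
    magneticDeriv φ a b (fun w => c * u w + d * v w) z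
      = c * magneticDeriv φ a b u z + d * magneticDeriv φ a b v z := by
  simp only [magneticDeriv]
  rw [fderiv_fun_add (hu.const_mul c) (hv.const_mul d), fderiv_const_mul hu,
    fderiv_const_mul hv]
  simp only [add_apply, smul_apply, smul_eq_mul]
  ring

theorem fderiv_magneticDeriv_apply {v : X → ℂ} (hφ : ContDiff ℝ 2 φ) (hv : ContDiff ℝ 2 v)
    (a b c z : X) :
    fderiv ℝ (magneticDeriv φ a b v) z c
      = -fderiv ℝ (fun w => fderiv ℝ v w a) z c
        - I / 2 * ((fderiv ℝ (fun w => fderiv ℝ φ w b) z c : ℂ) * v z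
          + (fderiv ℝ φ z b : ℂ) * fderiv ℝ v z c) := by
  have hva := hv.differentiable_fderiv_apply a
  have hφb := hφ.differentiable_fderiv_apply b
  have hv' := hv.differentiable two_ne_zero
  change fderiv ℝ (fun w => -(fderiv ℝ v w a) - I / 2 * (fderiv ℝ φ w b : ℂ) * v w) z c = _
  rw [fderiv_fun_sub (by fun_prop) (by fun_prop), fderiv_fun_neg,
    fderiv_fun_mul (by fun_prop) (by fun_prop), fderiv_const_mul (by fun_prop)]
  simp only [sub_apply, neg_apply, add_apply, smul_apply, smul_eq_mul,
    fderiv_ofReal_comp_apply (hφb z)]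
  ring

/-- By symmetry of the second derivatives of `v`, only second derivatives of `φ` survive. -/
theorem magneticDeriv_comm {v : X → ℂ} (hφ : ContDiff ℝ 2 φ) (hv : ContDiff ℝ 2 v)
    (a b c d z : X) :
    magneticDeriv φ a b (magneticDeriv φ c d v) z - magneticDeriv φ c d (magneticDeriv φ a b v) z
      = I / 2 * (fderiv ℝ (fun w => fderiv ℝ φ w d) z a
          - fderiv ℝ (fun w => fderiv ℝ φ w b) z c : ℝ) * v z := by
  simp only [magneticDeriv]
  rw [fderiv_magneticDeriv_apply hφ hv, fderiv_magneticDeriv_apply hφ hv,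
    hv.fderiv_fderiv_apply_comm z c a]
  push_cast
  ring

end MagneticDerivative

section Wirtinger

variable {n : ℕ} {φ : (Fin n → ℂ) → ℝ} {j : Fin n}

theorem opM1_eq_magneticDeriv : opM1 n φ j = magneticDeriv φ (Pi.single j 1) (Pi.single j I) :=
  rfl

theorem opM2_eq_magneticDeriv : opM2 n φ j = magneticDeriv φ (Pi.single j I) (-Pi.single j 1) := by
  ext v z
  simp only [opM2, magneticDeriv, DYc, DXr, map_neg, ofReal_neg]
  ring

theorem wdz_mul_sub_wdz_exp_half_mul {u : (Fin n → ℂ) → ℂ} {z : Fin n → ℂ}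
    (hφ : DifferentiableAt ℝ φ z) (hu : DifferentiableAt ℝ u z) :
    wdz n j (fun w => (φ w : ℂ)) z * (exp ((φ z : ℂ) / 2) * u z)
        - wdz n j (fun w => exp ((φ w : ℂ) / 2) * u w) z
      = exp ((φ z : ℂ) / 2) * ((opM1 n φ j u z - I * opM2 n φ j u z) / 2) := by
  simp only [wdz, DXc, DYc, opM1, opM2, DXr, DYr, fderiv_exp_half_mul_apply hφ hu,
    fderiv_ofReal_comp_apply hφ]
  linear_combination exp ((φ z : ℂ) / 2) * (fderiv ℝ φ z (Pi.single j 1) : ℂ) * u z / 4 * I_sq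

theorem exp_neg_half_mul_wdzb_exp_half_mul {u : (Fin n → ℂ) → ℂ} {z : Fin n → ℂ}
    (hφ : DifferentiableAt ℝ φ z) (hu : DifferentiableAt ℝ u z) :
    exp (-(φ z : ℂ) / 2) * wdzb n j (fun w => exp ((φ w : ℂ) / 2) * u w) z
      = -(opM1 n φ j u z + I * opM2 n φ j u z) / 2 := by
  have hexp : exp (-(φ z : ℂ) / 2) * exp ((φ z : ℂ) / 2) = 1 := by
    rw [← exp_add, neg_div, neg_add_cancel, exp_zero]
  simp only [wdzb, DXc, DYc, opM1, opM2, DXr, DYr, fderiv_exp_half_mul_apply hφ hu]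
  linear_combination (1 / 2 * (fderiv ℝ u z (Pi.single j 1) + I * fderiv ℝ u z (Pi.single j I))
    + (fderiv ℝ φ z (Pi.single j 1) + I * fderiv ℝ φ z (Pi.single j I) : ℂ) / 4 * u z) * hexp
    + (fderiv ℝ φ z (Pi.single j 1) : ℂ) * u z / 4 * I_sq

theorem conjugated_box0n_summand_eq {g : (Fin n → ℂ) → ℂ} (hφ : ContDiff ℝ 2 φ)
    (hg : ContDiff ℝ 2 g) (z : Fin n → ℂ) :
    exp (-(φ z : ℂ) / 2) * wdzb n j (fun w => wdz n j (fun v => (φ v : ℂ)) w *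
        (exp ((φ w : ℂ) / 2) * g w) - wdz n j (fun x => exp ((φ x : ℂ) / 2) * g x) w) z
      = 1 / 4 * (-(opM1 n φ j (opM1 n φ j g) z + opM2 n φ j (opM2 n φ j g) z)
          + ((DXr n j (fun w => DXr n j φ w) z + DYr n j (fun w => DYr n j φ w) z : ℝ) : ℂ) / 2
            * g z) := by
  have hφ1 := hφ.differentiable two_ne_zero
  have hg1 := hg.differentiable two_ne_zero
  have hM1 := hφ.differentiable_magneticDeriv hg (Pi.single j 1) (Pi.single j I)
  have hM2 := hφ.differentiable_magneticDeriv hg (Pi.single j I) (-Pi.single j 1)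
  have hconj : (fun w => wdz n j (fun v => (φ v : ℂ)) w * (exp ((φ w : ℂ) / 2) * g w)
      - wdz n j (fun x => exp ((φ x : ℂ) / 2) * g x) w)
      = fun w => exp ((φ w : ℂ) / 2) * (2⁻¹ * magneticDeriv φ (Pi.single j 1) (Pi.single j I) g w
          + (-I / 2) * magneticDeriv φ (Pi.single j I) (-Pi.single j 1) g w) := by
    funext w
    rw [wdz_mul_sub_wdz_exp_half_mul (hφ1 w) (hg1 w), opM1_eq_magneticDeriv,
      opM2_eq_magneticDeriv]
    ring
  rw [hconj, exp_neg_half_mul_wdzb_exp_half_mul (hφ1 z) (by fun_prop),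
    opM1_eq_magneticDeriv, opM2_eq_magneticDeriv, magneticDeriv_linear_comb (hM1 z) (hM2 z),
    magneticDeriv_linear_comb (hM1 z) (hM2 z)]
  have hcomm := magneticDeriv_comm hφ hg (Pi.single j 1) (Pi.single j I) (Pi.single j I)
    (-Pi.single j 1) z
  simp only [map_neg, fderiv_fun_neg, neg_apply, ofReal_sub, ofReal_neg] at hcomm
  simp only [DXr, DYr, ofReal_add]
  set P₂ := magneticDeriv φ (Pi.single j I) (-Pi.single j 1)
  linear_combination (I / 4) * hcomm + (P₂ (P₂ g) z / 4
    - (fderiv ℝ (fun w => fderiv ℝ φ w (Pi.single j 1)) z (Pi.single j 1)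
      + fderiv ℝ (fun w => fderiv ℝ φ w (Pi.single j I)) z (Pi.single j I) : ℂ) * g z / 8) * I_sq

end Wirtinger

/-- Let `φ : ℂⁿ → ℝ` and `g : ℂⁿ → ℂ` be of class `C²`, and set
`h = e^{φ/2}·g`. Then pointwise
`e^{-φ/2}·Σ_j ∂/∂z̄_j((∂φ/∂z_j)·h - ∂h/∂z_j) = ¼(-Δ_A g + V·g)`,
where `V = ½Δφ`. -/
theorem conjugated_box0n_eq_pauli_plus
    (n : ℕ) (φ : (Fin n → ℂ) → ℝ) (hφ : ContDiff ℝ 2 φ)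
    (g : (Fin n → ℂ) → ℂ) (hg : ContDiff ℝ 2 g)
    (h : (Fin n → ℂ) → ℂ) (hh : h = fun z => Complex.exp ((φ z : ℂ) / 2) * g z) :
    ∀ z, Complex.exp (-(φ z : ℂ) / 2) *
        (∑ j, wdzb n j
          (fun w => wdz n j (fun v => ((φ v : ℝ) : ℂ)) w * h w - wdz n j h w) z)
      = (1 / 4) * (-(lapA n φ g z) + (potV n φ z : ℂ) * g z) := by
  intro z
  subst hh
  rw [Finset.mul_sum]
  simp only [conjugated_box0n_summand_eq hφ hg, lapA, potV, lapR]
  push_cast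
  rw [Finset.mul_sum, Finset.sum_mul, ← Finset.sum_neg_distrib, ← Finset.sum_add_distrib,
    Finset.mul_sum]
  exact Finset.sum_congr rfl fun j _ => by ring
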